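/- arXiv:2112.04448 — 6 statements merged into one kernel-verified Lean document; each statement's English description precedes it below -/
import Mathlib

section
/- The number of dominating sets of any finite simple graph is odd. -/
open SimpleGraph Finset
open scoped symmDiff

variable {V : Type*}

/-- `D` is a dominating set of `G`: every vertex outside `D` has a neighbor in `D`. -/
def IsDomSet [DecidableEq V] (G : SimpleGraph V) (D : Finset V) : Prop :=
  ∀ z : V, z ∉ D → ∃ y ∈ D, G.Adj y z

/-- The dominating graph of `G`: vertices are the dominating sets of `G`, two of them
adjacent iff their symmetric difference is a singleton. -/
def DomGraph [DecidableEq V] (G : SimpleGraph V) :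
    SimpleGraph {D : Finset V // IsDomSet G D} where
  Adj X Y := (X.1 ∆ Y.1).card = 1
  symm := ⟨fun X Y h => by simpa [symmDiff_comm] using h⟩
  loopless := ⟨fun X h => by simp [symmDiff_self] at h⟩

/-- A graph has a Hamilton path iff some walk visits every vertex exactly once. -/
def HasHamiltonPath {α : Type*} [DecidableEq α] (G : SimpleGraph α) : Prop :=
  ∃ (a b : α) (p : G.Walk a b), p.IsHamiltonian

/-!
Call a pair `(A, B)` of vertex sets separated if `B` lies in the set `U(A)` of vertices that `A`
neither contains nor dominates; this relation is symmetric. For fixed `A` there are `2 ^ #U(A)`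
choices of `B`, which is odd exactly when `U(A) = ∅`, i.e. when `A` is dominating. Hence the number
of dominating sets has the parity of the number of separated pairs. The swap `(A, B) ↦ (B, A)`
pairs these off except for its fixed points, and `(∅, ∅)` is the only one since `A ⊆ U(A)`
forces `A = ∅`.
-/

theorem CharTwo.sum_sum_eq_sum_diag {α R : Type*} [Fintype α] [Semiring R] [CharP R 2]
    (f : α → α → R) (hf : ∀ a b, f a b = f b a) :
    ∑ a, ∑ b, f a b = ∑ a, f a a := by
  classical
  have hoffDiag : ∑ p ∈ univ.offDiag, f p.1 p.2 = 0 :=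
    sum_involution (fun p _ => p.swap)
      (fun p _ => by rw [Prod.fst_swap, Prod.snd_swap, hf p.2, CharTwo.add_self_eq_zero])
      (fun p hp _ hswap => (mem_offDiag.1 hp).2.2 (congrArg Prod.snd hswap))
      (fun p hp => by simpa [and_comm, eq_comm] using hp)
      (fun p _ => p.swap_swap)
  rw [← sum_product', ← diag_union_offDiag, sum_union (disjoint_diag_offDiag _), hoffDiag,
    add_zero, sum_diag]

namespace SimpleGraph

variable [Fintype V] [DecidableEq V] (G : SimpleGraph V) [DecidableRel G.Adj]

def undominated (A : Finset V) : Finset V :=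
  univ.filter fun v => v ∉ A ∧ ∀ a ∈ A, ¬G.Adj a v

variable {G}

theorem mem_undominated {A : Finset V} {v : V} :
    v ∈ G.undominated A ↔ v ∉ A ∧ ∀ a ∈ A, ¬G.Adj a v := by
  simp [undominated]

theorem subset_undominated_comm {A B : Finset V} :
    B ⊆ G.undominated A ↔ A ⊆ G.undominated B := by
  suffices ∀ {A B : Finset V}, B ⊆ G.undominated A → A ⊆ G.undominated B from ⟨this, this⟩
  intro A B hBA a ha
  refine mem_undominated.2 ⟨fun haB => (mem_undominated.1 (hBA haB)).1 ha, fun b hb hab => ?_⟩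
  exact (mem_undominated.1 (hBA hb)).2 a ha hab.symm

theorem subset_undominated_self_iff {A : Finset V} : A ⊆ G.undominated A ↔ A = ∅ := by
  refine ⟨fun h => eq_empty_of_forall_notMem fun a ha => ?_, fun h => h ▸ empty_subset _⟩
  exact (mem_undominated.1 (h ha)).1 ha

theorem undominated_eq_empty_iff {A : Finset V} : G.undominated A = ∅ ↔ IsDomSet G A := by
  simp [eq_empty_iff_forall_notMem, mem_undominated, IsDomSet]

end SimpleGraph

theorem number_of_dominating_sets_odd [Fintype V] [DecidableEq V] (G : SimpleGraph V) :
    Odd (Nat.card {D : Finset V // IsDomSet G D}) := by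
  classical
  rw [Nat.card_eq_fintype_card, Fintype.card_subtype, ← ZMod.natCast_eq_one_iff_odd]
  calc ((univ.filter fun D => IsDomSet G D).card : ZMod 2)
      = ∑ A : Finset V, if G.undominated A = ∅ then 1 else 0 := by
        simp only [undominated_eq_empty_iff, sum_boole]
    _ = ∑ A : Finset V, (2 : ZMod 2) ^ (G.undominated A).card := by
        simp only [CharTwo.two_eq_zero, zero_pow_eq, card_eq_zero]
    _ = ∑ A : Finset V, ∑ B : Finset V, if B ⊆ G.undominated A then 1 else 0 := by
        simp only [sum_boole, filter_subset_univ, card_powerset, Nat.cast_pow, Nat.cast_ofNat]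
    _ = ∑ A : Finset V, if A ⊆ G.undominated A then 1 else 0 :=
        CharTwo.sum_sum_eq_sum_diag _ fun A B => by simp only [subset_undominated_comm]
    _ = 1 := by simp only [subset_undominated_self_iff, sum_ite_eq', mem_univ, if_true]
end

section
/- If T is a tree on n ≥ 3 vertices, then either (1) there exist distinct vertices u, v, x of T with N_T(u) = N_T(v) = {x}, or (2) there exist distinct vertices u, v, w of T with N_T(v) = {u, w} and N_T(w) = {v}. -/
/-!
Root the tree at a vertex `y` of eccentricity at least two and let `x` be a vertex farthest
from `y`. Every vertex other than `y` has a unique neighbour closer to `y`, its parent, so a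
vertex at maximal distance from `y` is a leaf. Hence `x` is a leaf whose parent `x₁` is not `y`,
and every neighbour of `x₁` other than its parent `x₂` is a leaf at the same depth as `x`.
Either `x₁` has such a neighbour besides `x`, giving the first alternative, or
`N(x₁) = {x, x₂}`, giving the second.
-/

open SimpleGraph Finset
open scoped symmDiff

variable {V : Type*}

namespace SimpleGraph

variable {G : SimpleGraph V} {y z w w' : V}

lemma Reachable.exists_adj_dist_add_one_eq (hzy : G.Reachable z y) (hne : z ≠ y) :
    ∃ w, G.Adj z w ∧ G.dist y w + 1 = G.dist y z := by
  obtain ⟨p, -, hp⟩ := hzy.exists_path_of_dist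
  cases p with
  | nil => exact absurd rfl hne
  | @cons _ w _ hzw q =>
    have hle : G.dist w y ≤ q.length := dist_le q
    have htri := hzw.reachable.dist_triangle_left y
    rw [dist_eq_one_iff_adj.mpr hzw] at htri
    rw [Walk.length_cons] at hp
    exact ⟨w, hzw, by rw [dist_comm, dist_comm (u := y)]; omega⟩

lemma IsTree.eq_penultimate_of_adj_of_dist_lt (hG : G.IsTree) {p : G.Walk y z} (hp : p.IsPath)
    (hzw : G.Adj z w) (hlt : G.dist y w < G.dist y z) : w = p.penultimate := by
  classical
  obtain ⟨q, hq, hql⟩ := hG.connected.exists_path_of_dist y w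
  have hzq : z ∉ q.support := fun hz => hlt.not_ge <|
    (dist_le (q.takeUntil z hz)).trans ((q.length_takeUntil_le_length hz).trans hql.le)
  exact hG.isAcyclic.eq_penultimate_of_adj_end hp hzw <|
    hG.isAcyclic.mem_support_of_ne_mem_support_of_adj_of_isPath hp hq hzw hzq

lemma IsTree.eq_of_adj_of_dist_lt (hG : G.IsTree) (hzw : G.Adj z w) (hzw' : G.Adj z w')
    (hlt : G.dist y w < G.dist y z) (hlt' : G.dist y w' < G.dist y z) : w = w' := by
  obtain ⟨p, hp, -⟩ := hG.connected.exists_path_of_dist y z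
  exact (hG.eq_penultimate_of_adj_of_dist_lt hp hzw hlt).trans
    (hG.eq_penultimate_of_adj_of_dist_lt hp hzw' hlt').symm

lemma IsTree.neighborSet_eq_singleton_of_forall_dist_le (hG : G.IsTree)
    (hmax : ∀ v, G.dist y v ≤ G.dist y z) (hzw : G.Adj z w) : G.neighborSet z = {w} := by
  have hlt {v : V} (hzv : G.Adj z v) : G.dist y v < G.dist y z := by
    have := hmax v
    rcases hG.dist_eq_dist_add_one_of_adj y hzv with h | h <;> omega
  ext v
  exact ⟨fun hzv => hG.eq_of_adj_of_dist_lt hzv hzw (hlt hzv) (hlt hzw), fun h => h ▸ hzw⟩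

lemma IsTree.exists_two_le_dist [Fintype V] (hG : G.IsTree) (hn : 3 ≤ Fintype.card V) :
    ∃ y z, 2 ≤ G.dist y z := by
  obtain ⟨a, b, c, hab, hac, hbc⟩ := Fintype.two_lt_card_iff.mp hn
  by_contra! hlt
  have hadj {u v : V} (huv : u ≠ v) : G.Adj u v :=
    dist_eq_one_iff_adj.mp <| by have := hG.connected.pos_dist_of_ne huv; have := hlt u v; omega
  exact hG.dist_ne_of_adj a (hadj hbc) <| by
    rw [dist_eq_one_iff_adj.mpr (hadj hab), dist_eq_one_iff_adj.mpr (hadj hac)]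

end SimpleGraph

theorem tree_reduction_lemma [Fintype V] (T : SimpleGraph V) (hT : T.IsTree)
    (hn : 3 ≤ Fintype.card V) :
    (∃ u v x : V, u ≠ v ∧ u ≠ x ∧ v ≠ x ∧
      T.neighborSet u = {x} ∧ T.neighborSet v = {x}) ∨
    (∃ u v w : V, u ≠ v ∧ u ≠ w ∧ v ≠ w ∧
      T.neighborSet v = {u, w} ∧ T.neighborSet w = {v}) := by
  obtain ⟨y, x₀, hyx₀⟩ := hT.exists_two_le_dist hn
  have := hT.connected.nonempty
  obtain ⟨x, hx⟩ := Finite.exists_max (T.dist y)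
  have hd : 2 ≤ T.dist y x := hyx₀.trans (hx x₀)
  obtain ⟨x₁, hxx₁, hx₁⟩ :=
    (hT.connected x y).exists_adj_dist_add_one_eq (by rintro rfl; simp at hd)
  obtain ⟨x₂, hx₁x₂, hx₂⟩ :=
    (hT.connected x₁ y).exists_adj_dist_add_one_eq (by rintro rfl; simp at hx₁; omega)
  have hx_leaf : T.neighborSet x = {x₁} := hT.neighborSet_eq_singleton_of_forall_dist_le hx hxx₁
  by_cases hbranch : ∃ z, T.Adj x₁ z ∧ z ≠ x ∧ z ≠ x₂
  · obtain ⟨z, hx₁z, hzx, hzx₂⟩ := hbranch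
    have hz : T.dist y z = T.dist y x := by
      rcases hT.dist_eq_dist_add_one_of_adj y hx₁z with h | h
      · exact absurd (hT.eq_of_adj_of_dist_lt (y := y) hx₁z hx₁x₂ (by omega) (by omega))
          hzx₂
      · omega
    exact Or.inl ⟨x, z, x₁, hzx.symm, hxx₁.ne, hx₁z.ne',
      hx_leaf, hT.neighborSet_eq_singleton_of_forall_dist_le (hz ▸ hx) hx₁z.symm⟩
  · push Not at hbranch
    have hxx₂ : x₂ ≠ x := by rintro rfl; omega
    refine Or.inr ⟨x₂, x₁, x, hx₁x₂.ne', hxx₂, hxx₁.ne', ?_, hx_leaf⟩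
    ext v
    simp only [mem_neighborSet, Set.mem_insert_iff, Set.mem_singleton_iff]
    refine ⟨fun hv => (em (v = x)).elim Or.inr (Or.inl ∘ hbranch v hv), ?_⟩
    rintro (rfl | rfl)
    exacts [hx₁x₂, hxx₁.symm]
end

section
/- Let H be a finite simple graph with distinct vertices u, v, w such that N_H(v) = {u, w} and N_H(w) = {v}, and let H' = H - w - v. If the dominating graph D(H') has a Hamilton path, then D(H) has a Hamilton path. -/
open SimpleGraph Finset
open scoped symmDiff

variable {V : Type*}

/-!
Every dominating set of `H` contains `v` or `w`. Those avoiding `v` are the sets `A ∪ {w}` with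
`A` a dominating set of `H' = H - w - v`; those containing `v` are `A ∪ {v}` and
`A ∪ {v, w}` with `A` dominating `H'` except possibly at `u`, and such an `A` either dominates
`H'` or equals `B.erase u` for a dominating set `B ∋ u` of `H'`. So walk along a Hamilton path
`B₁, …, Bₙ` of `D(H')` through the sets `Bᵢ ∪ {w}`, step to `Bₙ ∪ {v, w}`, and walk back
along `Bₙ, …, B₁` snaking between the sets with and without `w`; at each `Bᵢ` whose
`Bᵢ.erase u` is not dominating, detour through `Bᵢ.erase u ∪ {v}` and `Bᵢ.erase u ∪ {v, w}`.
-/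

theorem hasHamiltonPath_iff_exists_list {α : Type*} [DecidableEq α] (G : SimpleGraph α) :
    HasHamiltonPath G ↔
      ∃ l : List α, l ≠ [] ∧ l.Nodup ∧ l.IsChain G.Adj ∧ ∀ a, a ∈ l := by
  constructor
  · rintro ⟨a, b, p, hp⟩
    exact ⟨p.support, p.support_ne_nil, hp.isPath.support_nodup, p.isChain_adj_support,
      hp.mem_support⟩
  · rintro ⟨l, hne, hnd, hc, hmem⟩
    rw [← Walk.support_ofSupport hne hc] at hnd hmem
    exact ⟨_, _, _, (Walk.IsPath.mk' hnd).isHamiltonian_of_mem hmem⟩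

def Dominates (G : SimpleGraph V) (D : Finset V) (T : Set V) : Prop :=
  ∀ z ∈ T, z ∉ D → ∃ y ∈ D, G.Adj y z

theorem Dominates.mono {G : SimpleGraph V} {D : Finset V} {T T' : Set V} (h : Dominates G D T)
    (hT : T' ⊆ T) : Dominates G D T' :=
  fun z hz => h z (hT hz)

theorem Dominates.insert_of_not_dominates [DecidableEq V] {G : SimpleGraph V} {B : Finset V}
    {T : Set V} {u : V} (h : Dominates G B (T \ {u})) (hn : ¬ Dominates G B T) :
    u ∉ B ∧ Dominates G (insert u B) T := by
  obtain ⟨z, hzT, hzB, hz⟩ : ∃ z ∈ T, z ∉ B ∧ ∀ y ∈ B, ¬ G.Adj y z := by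
    simpa [Dominates] using hn
  have hzu : z = u := by
    by_contra hzu
    obtain ⟨y, hy, hyz⟩ := h z ⟨hzT, hzu⟩ hzB
    exact hz y hy hyz
  subst hzu
  refine ⟨hzB, fun x hxT hx => ?_⟩
  rw [mem_insert, not_or] at hx
  obtain ⟨y, hy, hyx⟩ := h x ⟨hxT, hx.1⟩ hx.2
  exact ⟨y, mem_insert_of_mem hy, hyx⟩

theorem isDomSet_comap_subtype_iff [DecidableEq V] {p : V → Prop} (G : SimpleGraph V)
    (D : Finset (Subtype p)) :
    IsDomSet (G.comap Subtype.val) D ↔ Dominates G (D.map (.subtype p)) {z | p z} := by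
  constructor
  · intro h z hz hzD
    obtain ⟨y, hy, hyz⟩ := h ⟨z, hz⟩ fun h' => hzD (mem_map_of_mem _ h')
    exact ⟨y, mem_map_of_mem _ hy, hyz⟩
  · intro h z hzD
    obtain ⟨_, hy', hyz⟩ := h z z.2 fun h' => hzD ((mem_map' _).1 h')
    obtain ⟨y, hy, rfl⟩ := mem_map.1 hy'
    exact ⟨y, hy, hyz⟩

theorem exists_list_of_hasHamiltonPath_domGraph_comap [DecidableEq V] {p : V → Prop}
    {G : SimpleGraph V} (h : HasHamiltonPath (DomGraph (G.comap (Subtype.val : Subtype p → V)))) :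
    ∃ L : List (Finset V), L ≠ [] ∧ L.Nodup ∧ L.IsChain (fun A B => #(A ∆ B) = 1) ∧
      ∀ A, A ∈ L ↔ (∀ a ∈ A, p a) ∧ Dominates G A {z | p z} := by
  classical
  obtain ⟨l, hne, hnd, hc, hmem⟩ := (hasHamiltonPath_iff_exists_list _).1 h
  have hinj : Function.Injective fun D : {D // IsDomSet (G.comap Subtype.val) D} =>
      D.1.map (.subtype p) :=
    (Finset.map_injective _).comp Subtype.val_injective
  refine ⟨l.map fun D => D.1.map (.subtype p), by rwa [Ne, List.map_eq_nil_iff], hnd.map hinj,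
    List.isChain_map_of_isChain _ (fun D D' hDD' => ?_) hc, fun A => ⟨?_, ?_⟩⟩
  · rw [map_eq_image, map_eq_image, Function.Embedding.coe_subtype,
      ← image_symmDiff _ _ Subtype.val_injective, card_image_of_injective _ Subtype.val_injective]
    exact hDD'
  · rw [List.mem_map]
    rintro ⟨D, -, rfl⟩
    exact ⟨fun a ha => by obtain ⟨a, -, rfl⟩ := mem_map.1 ha; exact a.2,
      (isDomSet_comap_subtype_iff G D.1).1 D.2⟩
  · rintro ⟨hA, hdom⟩
    rw [← subtype_map_of_mem hA] at hdom ⊢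
    exact List.mem_map.2 ⟨⟨_, (isDomSet_comap_subtype_iff G _).2 hdom⟩, hmem _, rfl⟩

theorem hasHamiltonPath_domGraph_of_list [DecidableEq V] {G : SimpleGraph V}
    {L : List (Finset V)} (hne : L ≠ []) (hnd : L.Nodup) (hc : L.IsChain (fun A B => #(A ∆ B) = 1))
    (hmem : ∀ A, A ∈ L ↔ IsDomSet G A) : HasHamiltonPath (DomGraph G) := by
  lift L to List {D // IsDomSet G D} using fun A hA => (hmem A).1 hA
  refine (hasHamiltonPath_iff_exists_list _).2
    ⟨L, by rintro rfl; exact hne rfl, hnd.of_map _, (List.isChain_map Subtype.val).1 hc,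
      fun D => ?_⟩
  obtain ⟨D', hD', hDD'⟩ := List.mem_map.1 ((hmem D.1).2 D.2)
  exact Subtype.ext hDD' ▸ hD'

section Snake

variable {α β : Type*}

def snake (f : Bool → α → List β) : Bool → List α → List β
  | _, [] => []
  | b, a :: l => f b a ++ snake f (!b) l

variable {f : Bool → α → List β}

theorem exists_of_mem_snake {x : β} {b : Bool} {l : List α} (hx : x ∈ snake f b l) :
    ∃ a ∈ l, ∃ c, x ∈ f c a := by
  induction l generalizing b with
  | nil => simp [snake] at hx
  | cons a l ih =>
    rcases List.mem_append.1 hx with hx | hx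
    · exact ⟨a, List.mem_cons_self, b, hx⟩
    · obtain ⟨a', ha', c, hc⟩ := ih hx
      exact ⟨a', List.mem_cons_of_mem _ ha', c, hc⟩

theorem mem_snake_of_forall {x : β} {a : α} {l : List α} (ha : a ∈ l) (hx : ∀ c, x ∈ f c a)
    (b : Bool) : x ∈ snake f b l := by
  induction l generalizing b with
  | nil => simp at ha
  | cons a' l ih =>
    rcases List.mem_cons.1 ha with rfl | ha
    · exact List.mem_append_left _ (hx b)
    · exact List.mem_append_right _ (ih ha _)

theorem nodup_snake {l : List α} (hl : l.Nodup) (hf : ∀ a ∈ l, ∀ c, (f c a).Nodup)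
    (hsep : ∀ a ∈ l, ∀ a' ∈ l, ∀ c c' x, x ∈ f c a → x ∈ f c' a' → a = a') (b : Bool) :
    (snake f b l).Nodup := by
  induction l generalizing b with
  | nil => exact List.nodup_nil
  | cons a l ih =>
    rw [List.nodup_cons] at hl
    refine List.nodup_append.2 ⟨hf a List.mem_cons_self b,
      ih hl.2 (fun a ha => hf a (List.mem_cons_of_mem _ ha))
        (fun a ha a' ha' => hsep a (List.mem_cons_of_mem _ ha) a' (List.mem_cons_of_mem _ ha')) _,
      fun x hx y hy hxy => ?_⟩
    subst hxy
    obtain ⟨a', ha', c, hc⟩ := exists_of_mem_snake hy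
    rw [hsep a List.mem_cons_self a' (List.mem_cons_of_mem _ ha') b c x hx hc] at hl
    exact hl.1 ha'

theorem isChain_snake {R : β → β → Prop} {S : α → α → Prop} (g : Bool → α → β)
    {l : List α} (hl : l.IsChain S)
    (hends : ∀ a ∈ l, ∀ c,
      (f c a).head? = some (g c a) ∧ (f c a).getLast? = some (g (!c) a))
    (hf : ∀ a ∈ l, ∀ c, (f c a).IsChain R)
    (hg : ∀ a ∈ l, ∀ a' ∈ l, S a a' → ∀ c, R (g c a) (g c a')) (b : Bool) :
    (snake f b l).IsChain R := by
  induction l generalizing b with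
  | nil => exact List.IsChain.nil
  | cons a l ih =>
    refine (hf a List.mem_cons_self b).append
      (ih hl.tail (fun a ha => hends a (List.mem_cons_of_mem _ ha))
        (fun a ha => hf a (List.mem_cons_of_mem _ ha))
        (fun a ha a' ha' => hg a (List.mem_cons_of_mem _ ha) a' (List.mem_cons_of_mem _ ha')) _)
      fun x hx y hy => ?_
    cases l with
    | nil => simp [snake] at hy
    | cons a' l =>
      rw [(hends a List.mem_cons_self b).2, Option.mem_some_iff] at hx
      simp only [snake, List.head?_append, (hends a' (by simp) (!b)).1, Option.some_or,
        Option.mem_some_iff] at hy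
      subst hx hy
      exact hg a List.mem_cons_self a' (by simp) (List.isChain_cons_cons.1 hl).1 _

end Snake

theorem SimpleGraph.adj_iff_of_neighborSet_eq {G : SimpleGraph V} {v z : V} {s : Set V}
    (h : G.neighborSet v = s) : G.Adj v z ↔ z ∈ s := by
  rw [← mem_neighborSet, h]

section PendantPath

variable [DecidableEq V]

theorem card_symmDiff_of_subset {s t : Finset V} (h : s ⊆ t) : #(s ∆ t) = #t - #s := by
  rw [symmDiff_of_le h, card_sdiff_of_subset h]

theorem card_union_symmDiff_union {A A' C C' K : Finset V} (hA : Disjoint A K) (hA' : Disjoint A' K) (hC : C ⊆ K)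
    (hC' : C' ⊆ K) : #((A ∪ C) ∆ (A' ∪ C')) = #(A ∆ A') + #(C ∆ C') := by
  have h : Disjoint (A ∪ A') (C ∪ C') :=
    (disjoint_union_left.2 ⟨hA, hA'⟩).mono_right (union_subset hC hC')
  rw [← card_union_of_disjoint (h.mono symmDiff_subset_union symmDiff_subset_union)]
  congr 1
  ext x
  have := fun hx : x ∈ A ∪ A' => disjoint_left.1 h hx
  simp only [mem_symmDiff, mem_union] at this ⊢
  tauto

theorem eq_and_eq_of_union_eq_union {A A' C C' K : Finset V} (hA : Disjoint A K) (hA' : Disjoint A' K) (hC : C ⊆ K)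
    (hC' : C' ⊆ K) (he : A ∪ C = A' ∪ C') : A = A' ∧ C = C' := by
  have := card_union_symmDiff_union hA hA' hC hC'
  rw [he, symmDiff_self] at this
  simpa [eq_comm] using this

variable {H : SimpleGraph V} {u v w : V} {A A' : Finset V}

def row (v w : V) (b : Bool) (A : Finset V) : Finset V := A ∪ if b then {v, w} else {v}

theorem row_tag_subset (b : Bool) : (if b then {v, w} else {v} : Finset V) ⊆ {v, w} := by
  cases b <;> simp

theorem row_inj (hvw : v ≠ w) {b b' : Bool} (hA : Disjoint A {v, w}) (hA' : Disjoint A' {v, w})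
    (h : row v w b A = row v w b' A') : b = b' ∧ A = A' := by
  obtain ⟨hAA', htag⟩ :=
    eq_and_eq_of_union_eq_union hA hA' (row_tag_subset b) (row_tag_subset b') h
  refine ⟨?_, hAA'⟩
  cases b <;> cases b' <;> simp_all [eq_comm, Finset.ext_iff]

theorem v_mem_row (b : Bool) (A : Finset V) : v ∈ row v w b A := by
  cases b <;> simp [row]

theorem card_symmDiff_row_row (b : Bool) (hA : Disjoint A {v, w}) (hA' : Disjoint A' {v, w}) :
    #(row v w b A ∆ row v w b A') = #(A ∆ A') := by
  simp [row, card_union_symmDiff_union hA hA' (row_tag_subset b) (row_tag_subset b)]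

theorem card_symmDiff_row_not (hvw : v ≠ w) (b : Bool) (hA : Disjoint A {v, w}) :
    #(row v w b A ∆ row v w (!b) A) = 1 := by
  rw [row, row, card_union_symmDiff_union hA hA (row_tag_subset b) (row_tag_subset !b),
    symmDiff_self, bot_eq_empty, card_empty, zero_add]
  cases b
  · simp [card_symmDiff_of_subset, hvw]
  · simp [symmDiff_comm {v, w}, card_symmDiff_of_subset, hvw]

theorem card_symmDiff_union_singleton (hA : Disjoint A {v, w}) (hA' : Disjoint A' {v, w}) :
    #((A ∪ {w}) ∆ (A' ∪ {w})) = #(A ∆ A') := by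
  have hw : ({w} : Finset V) ⊆ {v, w} := by simp
  rw [card_union_symmDiff_union hA hA' hw hw, symmDiff_self, bot_eq_empty, card_empty, add_zero]

theorem card_symmDiff_union_singleton_row (hvw : v ≠ w) (hA : Disjoint A {v, w}) :
    #((A ∪ {w}) ∆ row v w true A) = 1 := by
  have hw : ({w} : Finset V) ⊆ {v, w} := by simp
  rw [row, card_union_symmDiff_union hA hA hw (row_tag_subset true)]
  simp [card_symmDiff_of_subset, hvw]

theorem mem_or_mem_of_isDomSet (hNw : H.neighborSet w = {v}) {X : Finset V}
    (hX : IsDomSet H X) : v ∈ X ∨ w ∈ X := by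
  by_contra! h
  obtain ⟨y, hy, hyw⟩ := hX w h.2
  have hyv : y = v := (adj_iff_of_neighborSet_eq hNw).1 hyw.symm
  exact h.1 (hyv ▸ hy)

theorem isDomSet_union_singleton_iff (hNw : H.neighborSet w = {v}) (hA : Disjoint A {v, w}) :
    IsDomSet H (A ∪ {w}) ↔ Dominates H A {z | z ≠ v ∧ z ≠ w} := by
  have hw : ∀ z, H.Adj w z ↔ z = v := fun z => adj_iff_of_neighborSet_eq hNw
  constructor
  · intro h z hz hzA
    obtain ⟨y, hy, hyz⟩ := h z (by simp [hzA, hz.2])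
    rcases mem_union.1 hy with hy | hy
    · exact ⟨y, hy, hyz⟩
    · rw [mem_singleton.1 hy, hw] at hyz
      exact absurd hyz hz.1
  · intro h z hz
    by_cases hzv : z = v
    · exact ⟨w, by simp, (hw z).2 hzv⟩
    have hzw : z ≠ w := by rintro rfl; simp at hz
    obtain ⟨y, hy, hyz⟩ := h z ⟨hzv, hzw⟩ fun hzA => hz (mem_union_left _ hzA)
    exact ⟨y, mem_union_left _ hy, hyz⟩

theorem isDomSet_row_iff (hNv : H.neighborSet v = {u, w}) (hNw : H.neighborSet w = {v})
    (b : Bool) (hA : Disjoint A {v, w}) :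
    IsDomSet H (row v w b A) ↔ Dominates H A ({z | z ≠ v ∧ z ≠ w} \ {u}) := by
  have hv : ∀ z, H.Adj v z ↔ z = u ∨ z = w := fun z => adj_iff_of_neighborSet_eq hNv
  have hw : ∀ z, H.Adj w z ↔ z = v := fun z => adj_iff_of_neighborSet_eq hNw
  constructor
  · rintro h z ⟨⟨hzv, hzw⟩, hzu⟩ hzA
    obtain ⟨y, hy, hyz⟩ := h z (by cases b <;> simp [row, hzA, hzv, hzw])
    have hyv : y ≠ v := by rintro rfl; exact (hv z).1 hyz |>.elim hzu hzw
    have hyw : y ≠ w := by rintro rfl; exact hzv ((hw z).1 hyz)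
    refine ⟨y, ?_, hyz⟩
    cases b <;> simpa [row, hyv, hyw] using hy
  · intro h z hz
    have hzv : z ≠ v := by rintro rfl; exact hz (v_mem_row b A)
    by_cases hzuw : z = u ∨ z = w
    · exact ⟨v, v_mem_row b A, (hv z).2 hzuw⟩
    rw [not_or] at hzuw
    obtain ⟨y, hy, hyz⟩ :=
      h z ⟨⟨hzv, hzuw.2⟩, hzuw.1⟩ fun hzA => hz (mem_union_left _ hzA)
    exact ⟨y, mem_union_left _ hy, hyz⟩

theorem card_symmDiff_erase {u : V} {A : Finset V} (hu : u ∈ A) : #(A ∆ A.erase u) = 1 := by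
  rw [symmDiff_comm, symmDiff_of_le (erase_subset u A), sdiff_erase_self hu, card_singleton]

open Classical in
noncomputable def column (H : SimpleGraph V) (u v w : V) (b : Bool) (A : Finset V) :
    List (Finset V) :=
  if u ∈ A ∧ Dominates H (A.erase u) ({z | z ≠ v ∧ z ≠ w} \ {u}) ∧
      ¬ Dominates H (A.erase u) {z | z ≠ v ∧ z ≠ w} then
    [row v w b A, row v w b (A.erase u), row v w (!b) (A.erase u), row v w (!b) A]
  else [row v w b A, row v w (!b) A]

theorem mem_column {X : Finset V} {c : Bool} :
    X ∈ column H u v w c A ↔ (∃ b, X = row v w b A) ∨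
      ((u ∈ A ∧ Dominates H (A.erase u) ({z | z ≠ v ∧ z ≠ w} \ {u}) ∧
        ¬ Dominates H (A.erase u) {z | z ≠ v ∧ z ≠ w}) ∧
        ∃ b, X = row v w b (A.erase u)) := by
  unfold column
  split_ifs with h <;> cases c <;> simp [h, Bool.exists_bool] <;> tauto

theorem column_ends (c : Bool) (A : Finset V) :
    (column H u v w c A).head? = some (row v w c A) ∧
      (column H u v w c A).getLast? = some (row v w (!c) A) := by
  unfold column
  split_ifs <;> simp

theorem isChain_column (hvw : v ≠ w) (c : Bool) (hA : Disjoint A {v, w}) :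
    (column H u v w c A).IsChain (fun X Y => #(X ∆ Y) = 1) := by
  have hAe : Disjoint (A.erase u) {v, w} := hA.mono_left (erase_subset u A)
  unfold column
  split_ifs with h
  · simp only [List.isChain_cons_cons, List.isChain_singleton, and_true]
    refine ⟨?_, card_symmDiff_row_not hvw c hAe, ?_⟩
    · rw [card_symmDiff_row_row c hA hAe, card_symmDiff_erase h.1]
    · rw [card_symmDiff_row_row _ hAe hA, symmDiff_comm, card_symmDiff_erase h.1]
  · simpa using card_symmDiff_row_not hvw c hA

theorem nodup_column (hvw : v ≠ w) (c : Bool) (hA : Disjoint A {v, w}) :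
    (column H u v w c A).Nodup := by
  have hAe : Disjoint (A.erase u) {v, w} := hA.mono_left (erase_subset u A)
  unfold column
  split_ifs with h
  · have hAne : A.erase u ≠ A := by simpa using h.1
    simp only [List.nodup_cons, List.mem_cons, List.not_mem_nil, List.nodup_nil]
    grind [row_inj]
  · simp only [List.nodup_cons, List.mem_cons, List.not_mem_nil, List.nodup_nil]
    grind [row_inj]

theorem eq_of_mem_column_of_mem_column (hvw : v ≠ w) {A' X : Finset V} {c c' : Bool}
    (hA : Disjoint A {v, w}) (hAdom : Dominates H A {z | z ≠ v ∧ z ≠ w})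
    (hA' : Disjoint A' {v, w}) (hAdom' : Dominates H A' {z | z ≠ v ∧ z ≠ w})
    (hX : X ∈ column H u v w c A) (hX' : X ∈ column H u v w c' A') : A = A' := by
  have hAe : Disjoint (A.erase u) {v, w} := hA.mono_left (erase_subset u A)
  have hAe' : Disjoint (A'.erase u) {v, w} := hA'.mono_left (erase_subset u A')
  rcases mem_column.1 hX with ⟨b, rfl⟩ | ⟨⟨hu, -, hn⟩, b, rfl⟩ <;>
    rcases mem_column.1 hX' with ⟨b', he⟩ | ⟨⟨hu', -, hn'⟩, b', he⟩
  · exact (row_inj hvw hA hA' he).2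
  · exact absurd ((row_inj hvw hA hAe' he).2 ▸ hAdom) hn'
  · exact absurd ((row_inj hvw hA' hAe he.symm).2 ▸ hAdom') hn
  · rw [← insert_erase hu, ← insert_erase hu', (row_inj hvw hAe hAe' he).2]

noncomputable def tour (H : SimpleGraph V) (u v w : V) (L : List (Finset V)) :
    List (Finset V) :=
  L.map (· ∪ {w}) ++ snake (column H u v w) true L.reverse

section Tour

variable {L : List (Finset V)}

theorem nodup_tour (hvw : v ≠ w) (hnd : L.Nodup)
    (hL : ∀ A, A ∈ L ↔ Disjoint A {v, w} ∧ Dominates H A {z | z ≠ v ∧ z ≠ w}) :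
    (tour H u v w L).Nodup := by
  have hw : ({w} : Finset V) ⊆ {v, w} := by simp
  refine List.nodup_append.2 ⟨hnd.map_on fun A hA A' hA' he => ?_, ?_, fun X hX Y hY hXY => ?_⟩
  · exact (eq_and_eq_of_union_eq_union ((hL A).1 hA).1 ((hL A').1 hA').1 hw hw he).1
  · refine nodup_snake (List.nodup_reverse.2 hnd) (fun A hA c => ?_)
      (fun A hA A' hA' c c' X hX hX' => ?_) _
    · exact nodup_column hvw c ((hL A).1 (List.mem_reverse.1 hA)).1
    · obtain ⟨hA, hAdom⟩ := (hL A).1 (List.mem_reverse.1 hA)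
      obtain ⟨hA', hAdom'⟩ := (hL A').1 (List.mem_reverse.1 hA')
      exact eq_of_mem_column_of_mem_column hvw hA hAdom hA' hAdom' hX hX'
  · subst hXY
    obtain ⟨A, hA, rfl⟩ := List.mem_map.1 hX
    obtain ⟨A', -, c, hc⟩ := exists_of_mem_snake hY
    have hv : v ∈ A ∪ {w} := by
      rcases mem_column.1 hc with ⟨b, hb⟩ | ⟨-, b, hb⟩ <;> exact hb ▸ v_mem_row b _
    rcases mem_union.1 hv with hv | hv
    · exact disjoint_left.1 ((hL A).1 hA).1 hv (by simp)
    · exact hvw (mem_singleton.1 hv)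

theorem isChain_tour (hvw : v ≠ w) (hne : L ≠ []) (hc : L.IsChain fun A B => #(A ∆ B) = 1)
    (hL : ∀ A, A ∈ L ↔ Disjoint A {v, w} ∧ Dominates H A {z | z ≠ v ∧ z ≠ w}) :
    (tour H u v w L).IsChain fun X Y => #(X ∆ Y) = 1 := by
  have hdisj : ∀ A ∈ L, Disjoint A {v, w} := fun A hA => ((hL A).1 hA).1
  refine List.IsChain.append ?_ ?_ ?_
  · refine (List.isChain_map _).2 (hc.imp_of_mem_imp fun A A' hA hA' hAA' => ?_)
    rwa [card_symmDiff_union_singleton (hdisj A hA) (hdisj A' hA')]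
  · refine isChain_snake (row v w) (List.isChain_reverse.2 hc) (fun A _ c => column_ends c A)
      (fun A hA c => isChain_column hvw c (hdisj A (List.mem_reverse.1 hA)))
      (fun A hA A' hA' hAA' c => ?_) true
    rw [card_symmDiff_row_row c (hdisj A (List.mem_reverse.1 hA))
      (hdisj A' (List.mem_reverse.1 hA')), symmDiff_comm, hAA']
  · obtain ⟨L₀, a, rfl⟩ : ∃ L₀ a, L = L₀ ++ [a] :=
      ⟨_, _, (List.dropLast_append_getLast hne).symm⟩
    simp only [List.map_append, List.map_cons, List.map_nil, List.getLast?_append,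
      List.getLast?_singleton, Option.some_or, Option.mem_some_iff, List.reverse_append,
      List.reverse_cons, List.reverse_nil, List.nil_append, List.singleton_append, snake,
      List.head?_append, (column_ends true a).1]
    rintro _ rfl _ rfl
    exact card_symmDiff_union_singleton_row hvw (hdisj a (by simp))

theorem isDomSet_of_mem_tour (hNv : H.neighborSet v = {u, w}) (hNw : H.neighborSet w = {v})
    (hL : ∀ A, A ∈ L ↔ Disjoint A {v, w} ∧ Dominates H A {z | z ≠ v ∧ z ≠ w})
    {X : Finset V} (hX : X ∈ tour H u v w L) : IsDomSet H X := by
  rcases List.mem_append.1 hX with hX | hX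
  · obtain ⟨A, hA, rfl⟩ := List.mem_map.1 hX
    exact (isDomSet_union_singleton_iff hNw ((hL A).1 hA).1).2 ((hL A).1 hA).2
  · obtain ⟨A, hA, c, hc⟩ := exists_of_mem_snake hX
    obtain ⟨hAd, hAdom⟩ := (hL A).1 (List.mem_reverse.1 hA)
    rcases mem_column.1 hc with ⟨b, rfl⟩ | ⟨⟨-, hq, -⟩, b, rfl⟩
    · exact (isDomSet_row_iff hNv hNw b hAd).2 (hAdom.mono Set.sdiff_subset)
    · exact (isDomSet_row_iff hNv hNw b (hAd.mono_left (erase_subset u A))).2 hq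

theorem mem_tour_of_isDomSet (huv : u ≠ v) (huw : u ≠ w) (hNv : H.neighborSet v = {u, w})
    (hNw : H.neighborSet w = {v})
    (hL : ∀ A, A ∈ L ↔ Disjoint A {v, w} ∧ Dominates H A {z | z ≠ v ∧ z ≠ w})
    {X : Finset V} (hX : IsDomSet H X) : X ∈ tour H u v w L := by
  set A := X \ {v, w} with hA
  have hAd : Disjoint A {v, w} := sdiff_disjoint
  rw [tour, List.mem_append]
  by_cases hv : v ∈ X
  · have hXA : X = row v w (decide (w ∈ X)) A := by
      ext z
      by_cases hw : w ∈ X <;> simp only [row, hA, hw, mem_union, mem_sdiff] <;> grind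
    rw [hXA, isDomSet_row_iff hNv hNw _ hAd] at hX
    right
    by_cases hdom : Dominates H A {z | z ≠ v ∧ z ≠ w}
    · exact mem_snake_of_forall (List.mem_reverse.2 ((hL A).2 ⟨hAd, hdom⟩))
        (fun c => mem_column.2 (Or.inl ⟨_, hXA⟩)) true
    · obtain ⟨hu, hins⟩ := hX.insert_of_not_dominates hdom
      have hinsd : Disjoint (insert u A) {v, w} :=
        disjoint_insert_left.2 ⟨by simp [huv, huw], hAd⟩
      have hcol : ∀ c, X ∈ column H u v w c (insert u A) := fun c => by
        rw [mem_column, erase_insert hu]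
        exact Or.inr ⟨⟨mem_insert_self u A, hX, hdom⟩, _, hXA⟩
      exact mem_snake_of_forall (List.mem_reverse.2 ((hL _).2 ⟨hinsd, hins⟩)) hcol true
  · have hw := (mem_or_mem_of_isDomSet hNw hX).resolve_left hv
    have hXA : X = A ∪ {w} := by
      ext z
      simp only [hA, mem_union, mem_sdiff, mem_insert, mem_singleton]
      grind
    rw [hXA, isDomSet_union_singleton_iff hNw hAd] at hX
    exact Or.inl (List.mem_map.2 ⟨A, (hL A).2 ⟨hAd, hX⟩, hXA.symm⟩)

end Tour

end PendantPath

theorem operationII_hamilton_path_general [DecidableEq V] (H : SimpleGraph V)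
    (u v w : V) (huv : u ≠ v) (huw : u ≠ w) (hvw : v ≠ w)
    (hNv : H.neighborSet v = {u, w}) (hNw : H.neighborSet w = {v})
    (h' : HasHamiltonPath (DomGraph
      (H.comap (Subtype.val : {z : V // z ≠ v ∧ z ≠ w} → V)))) :
    HasHamiltonPath (DomGraph H) := by
  obtain ⟨L, hne, hnd, hc, hL⟩ := exists_list_of_hasHamiltonPath_domGraph_comap h'
  replace hL : ∀ A, A ∈ L ↔
      Disjoint A {v, w} ∧ Dominates H A {z | z ≠ v ∧ z ≠ w} := by
    simpa only [Finset.disjoint_left, mem_insert, mem_singleton, not_or] using hL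
  exact hasHamiltonPath_domGraph_of_list (L := tour H u v w L) (by simp [tour, hne])
    (nodup_tour hvw hnd hL) (isChain_tour hvw hne hc hL)
    fun X => ⟨isDomSet_of_mem_tour hNv hNw hL, mem_tour_of_isDomSet huv huw hNv hNw hL⟩

theorem operationII_hamilton_path [Fintype V] [DecidableEq V] (H : SimpleGraph V)
    (u v w : V) (huv : u ≠ v) (huw : u ≠ w) (hvw : v ≠ w)
    (hNv : H.neighborSet v = {u, w}) (hNw : H.neighborSet w = {v})
    (h' : HasHamiltonPath (DomGraph
      (H.comap (Subtype.val : {z : V // z ≠ v ∧ z ≠ w} → V)))) :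
    HasHamiltonPath (DomGraph H) :=
  operationII_hamilton_path_general H u v w huv huw hvw hNv hNw h'
end

section
/- The dominating sets of the cycle C_n are exactly the bitwise complements of the Lucas strings of length n and order 3; i.e., X ⊆ {0,...,n-1} is a dominating set of C_n if and only if the binary string encoding the complement of X lies in L_{n,3}. -/
open SimpleGraph Finset
open scoped symmDiff

variable {V : Type*}

/-- The cycle graph `C_n` on vertex set `ZMod n`: `i` and `j` are adjacent iff
`i - j ≡ ±1 (mod n)` (and `i ≠ j`). -/
def cycG (n : ℕ) : SimpleGraph (ZMod n) :=
  SimpleGraph.fromRel (fun i j => i - j = 1)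

/-- A Lucas string of order 3: a circular binary string with no three
circularly consecutive ones. -/
def IsLucasString3 {n : ℕ} (x : ZMod n → Bool) : Prop :=
  ∀ i : ZMod n, ¬(x (i - 1) = true ∧ x i = true ∧ x (i + 1) = true)

/-! Both conditions say that every vertex `i ∉ X` has `i - 1 ∈ X` or `i + 1 ∈ X`: for domination
because the neighbours of `i` in the cycle are `i ± 1`, for the complement string because a
block of three consecutive ones in it is a vertex outside `X` whose two neighbours are outside `X`. -/

namespace cycG

variable {n : ℕ}

theorem adj_iff {i j : ZMod n} : (cycG n).Adj i j ↔ i ≠ j ∧ (i = j + 1 ∨ i = j - 1) := by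
  rw [cycG, fromRel_adj, sub_eq_iff_eq_add', sub_eq_iff_eq_add', eq_sub_iff_add_eq, eq_comm (a := j)]

theorem isDomSet_iff (X : Finset (ZMod n)) :
    IsDomSet (cycG n) X ↔ ∀ i ∉ X, i - 1 ∈ X ∨ i + 1 ∈ X := by
  refine forall₂_congr fun i hi => ⟨?_, ?_⟩
  · rintro ⟨j, hj, hji⟩
    obtain ⟨-, rfl | rfl⟩ := adj_iff.1 hji
    · exact Or.inr hj
    · exact Or.inl hj
  · -- the side condition `j ≠ i` of adjacency holds since `j ∈ X` and `i ∉ X`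
    rintro (hj | hj)
    · exact ⟨i - 1, hj, adj_iff.2 ⟨ne_of_mem_of_not_mem hj hi, Or.inr rfl⟩⟩
    · exact ⟨i + 1, hj, adj_iff.2 ⟨ne_of_mem_of_not_mem hj hi, Or.inl rfl⟩⟩

end cycG

theorem isLucasString3_not_mem_iff {n : ℕ} (X : Finset (ZMod n)) :
    IsLucasString3 (fun i => !decide (i ∈ X)) ↔ ∀ i ∉ X, i - 1 ∈ X ∨ i + 1 ∈ X := by
  simp only [IsLucasString3, Bool.not_eq_true', decide_eq_false_iff_not]
  exact forall_congr' fun i => by tauto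

theorem cycle_dominating_iff_complement_lucas_general (n : ℕ)
    (X : Finset (ZMod n)) (x : ZMod n → Bool) (hx : ∀ i, x i = true ↔ i ∈ X) :
    IsDomSet (cycG n) X ↔ IsLucasString3 (fun i => !(x i)) := by
  obtain rfl : x = fun i => decide (i ∈ X) :=
    funext fun i => by rw [Bool.eq_iff_iff, hx i, decide_eq_true_iff]
  rw [cycG.isDomSet_iff, isLucasString3_not_mem_iff]

theorem cycle_dominating_iff_complement_lucas (n : ℕ) (hn : 3 ≤ n)
    (X : Finset (ZMod n)) (x : ZMod n → Bool) (hx : ∀ i, x i = true ↔ i ∈ X) :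
    IsDomSet (cycG n) X ↔ IsLucasString3 (fun i => !(x i)) :=
  cycle_dominating_iff_complement_lucas_general n X x hx
end

section
/- For every n ≥ 1, the dominating graph D(P_n) of the path on n vertices has a Hamilton path. -/
open SimpleGraph Finset
open scoped symmDiff

variable {V : Type*}

/-!
Encode a set of vertices of `P_m` by its characteristic bit list. Let `D m` be the dominating
lists of length `m`, and `W m` those that become dominating once a `true` is prepended. Splitting
off the first one or two bits gives
  `W (m + 1) = 1·W m ∪ 0·D m`  and  `D (m + 2) = 1·W (m + 1) ∪ 01·W m`,
and reflecting and concatenating Gray codes along these decompositions yields Gray codes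
(consecutive lists differ in exactly one bit) of `W m` and `D m`. The junctions fit because `D m`
and `W m` start with the same list, and `W (m + 1)` starts with `1` followed by the last list of
`W m`. A Gray code of `D n` is exactly a Hamilton path of the dominating graph of `P_n`.
-/

theorem hasHamiltonPath_of_isChain {α : Type*} [DecidableEq α] {G : SimpleGraph α} {L : List α}
    (hne : L ≠ []) (hchain : L.IsChain G.Adj) (hnodup : L.Nodup) (hmem : ∀ a, a ∈ L) :
    HasHamiltonPath G :=
  ⟨_, _, Walk.ofSupport L hne hchain, fun v => by
    rw [Walk.support_ofSupport]
    exact List.count_eq_one_of_mem hnodup (hmem v)⟩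

theorem hasHamiltonPath_of_isChain_subtype {α : Type*} [DecidableEq α] {P : α → Prop}
    {G : SimpleGraph {x // P x}} {R : α → α → Prop} (hR : ∀ x y, R x.1 y.1 → G.Adj x y)
    {L : List α} (hne : L ≠ []) (hchain : L.IsChain R) (hnodup : L.Nodup)
    (hmem : ∀ x, x ∈ L ↔ P x) : HasHamiltonPath G := by
  refine hasHamiltonPath_of_isChain (L := L.pmap Subtype.mk fun x => (hmem x).1) ?_
    (List.isChain_pmap_of_isChain (fun x y _ _ h => hR ⟨x, _⟩ ⟨y, _⟩ h) hchain _)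
    (hnodup.pmap fun _ _ _ _ => congrArg Subtype.val) ?_
  · simpa using hne
  · rintro ⟨x, hx⟩
    exact List.mem_pmap.2 ⟨x, (hmem x).2 hx, rfl⟩

section GrayCode

variable {α : Type*} [DecidableEq α]

def hamming : List α → List α → ℕ
  | a :: l, b :: l' => (if a ≠ b then 1 else 0) + hamming l l'
  | _, _ => 0

@[simp] lemma hamming_cons_cons (a b : α) (l l' : List α) :
    hamming (a :: l) (b :: l') = (if a ≠ b then 1 else 0) + hamming l l' := rfl

@[simp] lemma hamming_self : ∀ l : List α, hamming l l = 0
  | [] => rfl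
  | a :: l => by simp [hamming_self l]

lemma hamming_comm : ∀ l l' : List α, hamming l l' = hamming l' l
  | [], [] | [], _ :: _ | _ :: _, [] => rfl
  | a :: l, b :: l' => by simp [hamming_comm l l', eq_comm]

structure IsGrayCode (L : List (List α)) (S : Set (List α)) : Prop where
  nodup : L.Nodup
  isChain : L.IsChain (fun a b => hamming a b = 1)
  mem_iff : ∀ l, l ∈ L ↔ l ∈ S

namespace IsGrayCode

variable {L L' : List (List α)} {S S' : Set (List α)}

lemma singleton (l : List α) : IsGrayCode [l] {l} :=
  ⟨List.nodup_singleton l, List.isChain_singleton l, fun _ => by simp⟩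

lemma reverse (h : IsGrayCode L S) : IsGrayCode L.reverse S where
  nodup := List.nodup_reverse.2 h.nodup
  isChain := List.isChain_reverse.2 (h.isChain.imp fun a b hab => by rwa [hamming_comm])
  mem_iff l := List.mem_reverse.trans (h.mem_iff l)

lemma map_cons (h : IsGrayCode L S) (a : α) : IsGrayCode (L.map (a :: ·)) ((a :: ·) '' S) where
  nodup := h.nodup.map List.cons_injective
  isChain := (List.isChain_map _).2 (h.isChain.imp fun x y hxy => by simpa using hxy)
  mem_iff l := by simp [h.mem_iff]

lemma cons_append_cons {a b : α} (hab : a ≠ b) (h : IsGrayCode L S) (h' : IsGrayCode L' S')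
    (hjoin : L.getLast? = L'.head?) :
    IsGrayCode (L.map (a :: ·) ++ L'.map (b :: ·)) ((a :: ·) '' S ∪ (b :: ·) '' S') where
  nodup := by
    refine (h.map_cons a).nodup.append (h'.map_cons b).nodup ?_
    simp [List.disjoint_left, hab.symm]
  isChain := by
    refine List.isChain_append.2 ⟨(h.map_cons a).isChain, (h'.map_cons b).isChain, ?_⟩
    simp only [List.getLast?_map, List.head?_map, hjoin, Option.mem_def, Option.map_eq_some_iff]
    rintro _ ⟨l, hl, rfl⟩ _ ⟨l', hl', rfl⟩
    obtain rfl : l = l' := Option.some_injective _ (hl.symm.trans hl')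
    simp [hab]
  mem_iff l := by simp [h.mem_iff, h'.mem_iff]

end IsGrayCode

end GrayCode

namespace PathDomination

def bit (l : List Bool) (i : ℕ) : Bool := l.getD i false

@[simp] lemma bit_cons_zero (b : Bool) (l : List Bool) : bit (b :: l) 0 = b := rfl

@[simp] lemma bit_cons_succ (b : Bool) (l : List Bool) (i : ℕ) :
    bit (b :: l) (i + 1) = bit l i := rfl

def domAt (l : List Bool) : ℕ → Bool
  | 0 => bit l 0 || bit l 1
  | i + 1 => bit l i || bit l (i + 1) || bit l (i + 2)

def IsDom (l : List Bool) : Prop := ∀ i < l.length, domAt l i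

@[simp] lemma domAt_cons_zero (b : Bool) (l : List Bool) :
    domAt (b :: l) 0 = (b || bit l 0) := rfl

lemma domAt_cons_one (b : Bool) (l : List Bool) : domAt (b :: l) 1 = (b || domAt l 0) := by
  cases b <;> rfl

lemma domAt_cons_add_two (b : Bool) (l : List Bool) (i : ℕ) :
    domAt (b :: l) (i + 2) = domAt l (i + 1) := rfl

lemma domAt_false_cons_succ (l : List Bool) (i : ℕ) :
    domAt (false :: l) (i + 1) = domAt l i := by
  cases i
  · rw [domAt_cons_one, Bool.false_or]
  · rfl

lemma isDom_cons_iff {b : Bool} {l : List Bool} :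
    IsDom (b :: l) ↔ domAt (b :: l) 0 ∧ ∀ i < l.length, domAt (b :: l) (i + 1) := by
  simp only [IsDom, List.length_cons, Nat.forall_lt_succ_left]

lemma isDom_false_cons_iff {l : List Bool} : IsDom (false :: l) ↔ bit l 0 ∧ IsDom l := by
  simp only [isDom_cons_iff, domAt_cons_zero, Bool.false_or, domAt_false_cons_succ]
  rfl

lemma isDom_true_cons_cons_iff {b : Bool} {l : List Bool} :
    IsDom (true :: b :: l) ↔ ∀ i < l.length, domAt (b :: l) (i + 1) := by
  simp only [isDom_cons_iff, List.length_cons, Nat.forall_lt_succ_left, zero_add, domAt_cons_zero,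
    domAt_cons_one, domAt_cons_add_two, Bool.true_or, true_and]

lemma isDom_true_true_cons_iff {l : List Bool} :
    IsDom (true :: true :: l) ↔ IsDom (true :: l) := by
  simp only [isDom_true_cons_cons_iff, isDom_cons_iff (l := l), domAt_cons_zero, Bool.true_or,
    true_and]

lemma isDom_true_false_cons_iff {l : List Bool} : IsDom (true :: false :: l) ↔ IsDom l := by
  simp only [isDom_true_cons_cons_iff, domAt_false_cons_succ]
  rfl

def domLists (m : ℕ) : Set (List Bool) := {l | l.length = m ∧ IsDom l}

def domListsAfterTrue (m : ℕ) : Set (List Bool) := {l | l.length = m ∧ IsDom (true :: l)}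

lemma domListsAfterTrue_zero : domListsAfterTrue 0 = {[]} := by
  ext (_ | _) <;> simp [domListsAfterTrue, isDom_cons_iff]

lemma domLists_zero : domLists 0 = {[]} := by
  ext (_ | _) <;> simp [domLists, IsDom]

lemma domLists_one : domLists 1 = {[true]} := by
  ext (_ | ⟨_ | _, _ | _⟩) <;> simp [domLists, isDom_cons_iff, bit]

lemma domListsAfterTrue_succ (m : ℕ) :
    domListsAfterTrue (m + 1) =
      (true :: ·) '' domListsAfterTrue m ∪ (false :: ·) '' domLists m := by
  ext (_ | ⟨b, l⟩)
  · simp [domListsAfterTrue]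
  · cases b <;> simp [domListsAfterTrue, domLists, isDom_true_true_cons_iff,
      isDom_true_false_cons_iff]

lemma domLists_add_two (m : ℕ) :
    domLists (m + 2) = (true :: ·) '' domListsAfterTrue (m + 1) ∪
      (false :: ·) '' ((true :: ·) '' domListsAfterTrue m) := by
  ext (_ | ⟨_ | _, _ | ⟨_ | _, l⟩⟩)
  all_goals simp [domListsAfterTrue, domLists, isDom_false_cons_iff]

def grayCodePair : ℕ → List (List Bool) × List (List Bool)
  | 0 => ([[]], [[]])
  | 1 => ([[true]], [[true], [false]])
  | m + 2 =>
    ((grayCodePair (m + 1)).2.reverse.map (true :: ·) ++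
        ((grayCodePair m).2.reverse.map (true :: ·)).map (false :: ·),
      (grayCodePair (m + 1)).2.reverse.map (true :: ·) ++
        (grayCodePair (m + 1)).1.map (false :: ·))

def grayDom (m : ℕ) : List (List Bool) := (grayCodePair m).1

def grayDomAfterTrue (m : ℕ) : List (List Bool) := (grayCodePair m).2

lemma grayDomAfterTrue_succ (m : ℕ) :
    grayDomAfterTrue (m + 1) =
      (grayDomAfterTrue m).reverse.map (true :: ·) ++ (grayDom m).map (false :: ·) := by
  cases m <;> rfl

lemma grayDom_add_two (m : ℕ) :
    grayDom (m + 2) = (grayDomAfterTrue (m + 1)).reverse.map (true :: ·) ++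
      ((grayDomAfterTrue m).reverse.map (true :: ·)).map (false :: ·) := rfl

lemma grayDomAfterTrue_ne_nil : ∀ m, grayDomAfterTrue m ≠ []
  | 0 => List.cons_ne_nil _ _
  | m + 1 => by simp [grayDomAfterTrue_succ, grayDomAfterTrue_ne_nil m]

lemma head?_grayDomAfterTrue_succ (m : ℕ) :
    (grayDomAfterTrue (m + 1)).head? = (grayDomAfterTrue m).getLast?.map (true :: ·) := by
  rw [grayDomAfterTrue_succ, List.head?_append, List.head?_map, List.head?_reverse,
    Option.or_of_isSome (by simpa using grayDomAfterTrue_ne_nil m)]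

lemma head?_grayDom : ∀ m, (grayDom m).head? = (grayDomAfterTrue m).head?
  | 0 | 1 => rfl
  | m + 2 => by
    have hne : ((grayDomAfterTrue (m + 1)).reverse.map (true :: ·)).head?.isSome := by
      simpa using grayDomAfterTrue_ne_nil (m + 1)
    rw [grayDom_add_two, grayDomAfterTrue_succ (m + 1), List.head?_append, List.head?_append,
      Option.or_of_isSome hne, Option.or_of_isSome hne]

lemma isGrayCode_grayDomAfterTrue_succ {m : ℕ}
    (hW : IsGrayCode (grayDomAfterTrue m) (domListsAfterTrue m))
    (hD : IsGrayCode (grayDom m) (domLists m)) :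
    IsGrayCode (grayDomAfterTrue (m + 1)) (domListsAfterTrue (m + 1)) := by
  rw [grayDomAfterTrue_succ, domListsAfterTrue_succ]
  exact hW.reverse.cons_append_cons (by decide) hD (by
    rw [List.getLast?_reverse, head?_grayDom])

lemma isGrayCode_grayDom_add_two {m : ℕ}
    (hW₁ : IsGrayCode (grayDomAfterTrue (m + 1)) (domListsAfterTrue (m + 1)))
    (hW₀ : IsGrayCode (grayDomAfterTrue m) (domListsAfterTrue m)) :
    IsGrayCode (grayDom (m + 2)) (domLists (m + 2)) := by
  rw [grayDom_add_two, domLists_add_two]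
  exact hW₁.reverse.cons_append_cons (by decide) (hW₀.reverse.map_cons true) (by
    rw [List.getLast?_reverse, head?_grayDomAfterTrue_succ, List.head?_map, List.head?_reverse])

lemma isGrayCode_grayDom_and_grayDomAfterTrue (m : ℕ) :
    IsGrayCode (grayDom m) (domLists m) ∧
      IsGrayCode (grayDomAfterTrue m) (domListsAfterTrue m) := by
  have base : IsGrayCode (grayDom 0) (domLists 0) ∧
      IsGrayCode (grayDomAfterTrue 0) (domListsAfterTrue 0) := by
    rw [domLists_zero, domListsAfterTrue_zero]
    exact ⟨IsGrayCode.singleton [], IsGrayCode.singleton []⟩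
  induction m using Nat.twoStepInduction with
  | zero => exact base
  | one =>
    refine ⟨?_, isGrayCode_grayDomAfterTrue_succ base.2 base.1⟩
    rw [domLists_one]
    exact IsGrayCode.singleton [true]
  | more m h₀ h₁ =>
    exact ⟨isGrayCode_grayDom_add_two h₁.2 h₀.2,
      isGrayCode_grayDomAfterTrue_succ h₁.2 h₁.1⟩

lemma isGrayCode_grayDom (m : ℕ) : IsGrayCode (grayDom m) (domLists m) :=
  (isGrayCode_grayDom_and_grayDomAfterTrue m).1

lemma bit_eq_getElem {l : List Bool} {i : ℕ} (hi : i < l.length) : bit l i = l[i] :=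
  List.getD_eq_getElem _ _ hi

lemma lt_length_of_bit {l : List Bool} {i : ℕ} (h : bit l i) : i < l.length := by
  by_contra hi
  rw [bit, List.getD_eq_default _ _ (not_lt.1 hi)] at h
  exact Bool.false_ne_true h

lemma domAt_iff_exists {l : List Bool} {i : ℕ} :
    domAt l i ↔ ∃ j, bit l j ∧ (j = i ∨ j + 1 = i ∨ i + 1 = j) := by
  constructor
  · cases i with
    | zero =>
      simp only [domAt, Bool.or_eq_true]
      rintro (h | h) <;> exact ⟨_, h, by omega⟩
    | succ i =>
      simp only [domAt, Bool.or_eq_true]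
      rintro ((h | h) | h) <;> exact ⟨_, h, by omega⟩
  · rintro ⟨j, hj, hji⟩
    cases i with
    | zero =>
      obtain rfl | rfl : j = 0 ∨ j = 1 := by omega
      all_goals simp [domAt, hj]
    | succ i =>
      obtain rfl | rfl | rfl : j = i ∨ j = i + 1 ∨ j = i + 2 := by omega
      all_goals simp [domAt, hj]

def ofBits (n : ℕ) (l : List Bool) : Finset (Fin n) := {i | bit l i}

lemma mem_ofBits {n : ℕ} {l : List Bool} {i : Fin n} : i ∈ ofBits n l ↔ bit l i := by
  simp [ofBits]

lemma ofBits_ofFn {n : ℕ} (D : Finset (Fin n)) :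
    ofBits n (List.ofFn fun i => decide (i ∈ D)) = D := by
  ext i
  simp [mem_ofBits, bit_eq_getElem]

lemma ofBits_inj {n : ℕ} {l l' : List Bool} (hl : l.length = n) (hl' : l'.length = n)
    (h : ofBits n l = ofBits n l') : l = l' := by
  refine List.ext_getElem (hl.trans hl'.symm) fun i hi hi' => ?_
  have := congrArg (⟨i, hl ▸ hi⟩ ∈ ·) h
  simpa [mem_ofBits, bit_eq_getElem hi, bit_eq_getElem hi'] using this

lemma hamming_eq_card : ∀ {l l' : List Bool}, l.length = l'.length →
    hamming l l' = #{i ∈ range l.length | bit l i ≠ bit l' i}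
  | [], [], _ => rfl
  | a :: l, b :: l', h => by
    rw [hamming_cons_cons, hamming_eq_card (Nat.succ_injective h), List.length_cons,
      card_filter, card_filter, sum_range_succ']
    simp only [bit_cons_zero, bit_cons_succ]
    exact add_comm _ _

lemma card_symmDiff_ofBits {n : ℕ} {l l' : List Bool} (hl : l.length = n) (hl' : l'.length = n) :
    #(ofBits n l ∆ ofBits n l') = hamming l l' := by
  rw [hamming_eq_card (hl.trans hl'.symm), hl, card_filter, ← Fin.sum_univ_eq_sum_range
    (fun i => if bit l i ≠ bit l' i then 1 else 0), ← card_filter]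
  congr 1
  ext i
  simp only [mem_symmDiff, mem_ofBits, mem_filter, mem_univ, true_and]
  cases bit l i <;> cases bit l' i <;> simp

lemma isDomSet_ofBits_iff {n : ℕ} {l : List Bool} (hl : l.length = n) :
    IsDomSet (pathGraph n) (ofBits n l) ↔ IsDom l := by
  simp only [IsDomSet, IsDom, hl, mem_ofBits, pathGraph_adj, domAt_iff_exists]
  constructor
  · intro h i hi
    by_cases hbit : bit l i
    · exact ⟨i, hbit, Or.inl rfl⟩
    · obtain ⟨j, hj, hadj⟩ := h ⟨i, hi⟩ hbit
      exact ⟨j, hj, by simp only at hadj; omega⟩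
  · intro h z hz
    obtain ⟨j, hj, hadj⟩ := h z z.2
    have hjz : j ≠ z := fun hjz => hz (hjz ▸ hj)
    exact ⟨⟨j, hl ▸ lt_length_of_bit hj⟩, hj, by simp only; omega⟩

lemma mem_map_ofBits_grayDom_iff {n : ℕ} {D : Finset (Fin n)} :
    D ∈ (grayDom n).map (ofBits n) ↔ IsDomSet (pathGraph n) D := by
  have hgray := isGrayCode_grayDom n
  constructor
  · intro hD
    obtain ⟨l, hl, rfl⟩ := List.mem_map.1 hD
    obtain ⟨hlen, hdom⟩ := (hgray.mem_iff l).1 hl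
    exact (isDomSet_ofBits_iff hlen).2 hdom
  · intro hD
    rw [← ofBits_ofFn D] at hD ⊢
    have hlen : (List.ofFn fun i => decide (i ∈ D)).length = n := List.length_ofFn
    exact List.mem_map_of_mem ((hgray.mem_iff _).2 ⟨hlen, (isDomSet_ofBits_iff hlen).1 hD⟩)

end PathDomination

open PathDomination in
theorem path_domGraph_hamilton_path_general (n : ℕ) :
    HasHamiltonPath (DomGraph (pathGraph n)) := by
  have hgray := isGrayCode_grayDom n
  have hlen : ∀ l ∈ grayDom n, l.length = n := fun l hl => ((hgray.mem_iff l).1 hl).1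
  have hdom_univ : IsDomSet (pathGraph n) univ := fun z hz => absurd (mem_univ z) hz
  refine hasHamiltonPath_of_isChain_subtype (R := fun X Y => #(X ∆ Y) = 1) (fun _ _ => id)
    (List.ne_nil_of_mem (mem_map_ofBits_grayDom_iff.2 hdom_univ)) ?_ ?_
    fun _ => mem_map_ofBits_grayDom_iff
  · refine (List.isChain_map _).2 (hgray.isChain.imp_of_mem_imp fun a b ha hb h => ?_)
    rwa [card_symmDiff_ofBits (hlen a ha) (hlen b hb)]
  · exact hgray.nodup.map_on fun a ha b hb => ofBits_inj (hlen a ha) (hlen b hb)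

theorem path_domGraph_hamilton_path (n : ℕ) (hn : 1 ≤ n) :
    HasHamiltonPath (DomGraph (pathGraph n)) :=
  path_domGraph_hamilton_path_general n
end

section
/- Let H be a graph with distinct vertices u, v, w such that N_H(v) = {u, w} and N_H(w) = {v}, and let H' = H − w − v. Then every dominating set of H contains at least one of v and w, and D is a dominating set of H if and only if D ∩ {v,w} ≠ ∅ and D \ {v,w} is a dominating set of H' − u with (D\{v,w}) ∩ N_{H'}[u] = ∅ and v ∈ D, or D \ {v,w} is a dominating set of H'. -/
/-! The pendant path `u – v – w` forces `v` or `w` into every dominating set `D`, and `v, w`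
dominate each other, while every vertex other than `u` outside `{v, w}` has all its neighbours
outside `{v, w}`. So `D` dominates `H` iff `D` meets `{v, w}`, `D \ {v, w}` dominates every vertex
of `H'` except possibly `u`, and `u` is dominated either by `v` or within `H'`. The two
alternatives of the statement are the cases "`u` not dominated within `H'`" (so `v ∈ D`, and `D`
avoids `N_{H'}[u]`) and "`u` dominated within `H'`". -/

open SimpleGraph Finset
open scoped symmDiff

variable {V : Type*}

section Domination

variable {G : SimpleGraph V} {D : Finset V}

theorem IsDomSet.mem_or_mem_of_neighborSet_eq_singleton [DecidableEq V] {v w : V}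
    (hD : IsDomSet G D) (hNw : G.neighborSet w = {v}) : v ∈ D ∨ w ∈ D := by
  by_contra! h
  obtain ⟨y, hyD, hyw⟩ := hD w h.2
  have hyv : y = v := by simpa [← mem_neighborSet, hNw] using hyw.symm
  exact h.1 (hyv ▸ hyD)

theorem isDomSet_comap_subtype_iff_s17 [DecidableEq V] (p : V → Prop) [DecidablePred p] :
    IsDomSet (G.comap (Subtype.val : {z // p z} → V)) (D.subtype p) ↔
      ∀ z, p z → z ∉ D → ∃ y ∈ D, p y ∧ G.Adj y z := by
  simp only [IsDomSet, Subtype.forall, Subtype.exists, mem_subtype, comap_adj, exists_prop,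
    and_left_comm]

theorem disjoint_subtype_insert_neighborSet_iff (p : V → Prop) [DecidablePred p] {a : V}
    (ha : p a) :
    Disjoint (D.subtype p : Set {z // p z})
        (insert ⟨a, ha⟩ ((G.comap (Subtype.val : {z // p z} → V)).neighborSet ⟨a, ha⟩)) ↔
      a ∉ D ∧ ∀ y ∈ D, p y → ¬G.Adj a y := by
  simp only [Set.disjoint_left, Subtype.forall, mem_coe, mem_subtype,
    Set.mem_insert_iff, Subtype.mk.injEq, mem_neighborSet, comap_adj, not_or]
  grind

theorem isDomSet_iff_of_pendant_path [DecidableEq V] {u v w : V} (huv : u ≠ v)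
    (hNv : G.neighborSet v = {u, w}) (hNw : G.neighborSet w = {v}) :
    IsDomSet G D ↔ (v ∈ D ∨ w ∈ D) ∧
      (v ∈ D ∨ u ∈ D ∨ ∃ y ∈ D, (y ≠ v ∧ y ≠ w) ∧ G.Adj y u) ∧
      ∀ z, (z ≠ v ∧ z ≠ w) → z ≠ u → z ∉ D → ∃ y ∈ D, (y ≠ v ∧ y ≠ w) ∧ G.Adj y z := by
  have hAdjv : ∀ z, G.Adj v z ↔ z = u ∨ z = w := fun z => by
    rw [← mem_neighborSet, hNv, Set.mem_insert_iff, Set.mem_singleton_iff]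
  have hAdjw : ∀ z, G.Adj w z ↔ z = v := fun z => by
    rw [← mem_neighborSet, hNw, Set.mem_singleton_iff]
  constructor
  · intro hD
    refine ⟨hD.mem_or_mem_of_neighborSet_eq_singleton hNw, ?_, ?_⟩
    · by_cases hu : u ∈ D
      · exact Or.inr (Or.inl hu)
      obtain ⟨y, hyD, hyu⟩ := hD u hu
      by_cases hyv : y = v
      · exact Or.inl (hyv ▸ hyD)
      have hyw : y ≠ w := by rintro rfl; exact huv ((hAdjw u).1 hyu)
      exact Or.inr (Or.inr ⟨y, hyD, ⟨hyv, hyw⟩, hyu⟩)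
    · rintro z ⟨hzv, hzw⟩ hzu hzD
      obtain ⟨y, hyD, hyz⟩ := hD z hzD
      have hyv : y ≠ v := by rintro rfl; exact ((hAdjv z).1 hyz).elim hzu hzw
      have hyw : y ≠ w := by rintro rfl; exact hzv ((hAdjw z).1 hyz)
      exact ⟨y, hyD, ⟨hyv, hyw⟩, hyz⟩
  · rintro ⟨hvw, hu, hrest⟩ z hzD
    by_cases hzv : z = v
    · subst hzv
      exact ⟨w, hvw.resolve_left hzD, (hAdjw z).2 rfl⟩
    by_cases hzw : z = w
    · subst hzw
      exact ⟨v, hvw.resolve_right hzD, (hAdjv z).2 (Or.inr rfl)⟩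
    by_cases hzu : z = u
    · subst hzu
      rcases hu with hv | hz | ⟨y, hyD, -, hyz⟩
      · exact ⟨v, hv, (hAdjv z).2 (Or.inl rfl)⟩
      · exact absurd hz hzD
      · exact ⟨y, hyD, hyz⟩
    obtain ⟨y, hyD, -, hyz⟩ := hrest z ⟨hzv, hzw⟩ hzu hzD
    exact ⟨y, hyD, hyz⟩

end Domination

theorem operationII_dominating_sets_general [DecidableEq V] (H : SimpleGraph V) (u v w : V)
    (huv : u ≠ v) (huw : u ≠ w)
    (hNv : H.neighborSet v = {u, w}) (hNw : H.neighborSet w = {v}) :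
    (∀ D : Finset V, IsDomSet H D → v ∈ D ∨ w ∈ D) ∧
    (∀ D : Finset V, IsDomSet H D ↔
      ((v ∈ D ∨ w ∈ D) ∧
        ((IsDomSet
            ((H.comap (Subtype.val : {z : V // z ≠ v ∧ z ≠ w} → V)).comap
              (Subtype.val : {z : {z : V // z ≠ v ∧ z ≠ w} //
                z ≠ (⟨u, huv, huw⟩ : {z : V // z ≠ v ∧ z ≠ w})} → _))
            ((D.subtype (fun z => z ≠ v ∧ z ≠ w)).subtype
              (· ≠ (⟨u, huv, huw⟩ : {z : V // z ≠ v ∧ z ≠ w}))) ∧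
          Disjoint ((D.subtype (fun z => z ≠ v ∧ z ≠ w) : Finset _) : Set _)
            (insert (⟨u, huv, huw⟩ : {z : V // z ≠ v ∧ z ≠ w})
              ((H.comap (Subtype.val : {z : V // z ≠ v ∧ z ≠ w} → V)).neighborSet
                ⟨u, huv, huw⟩)) ∧
          v ∈ D) ∨
        IsDomSet (H.comap (Subtype.val : {z : V // z ≠ v ∧ z ≠ w} → V))
          (D.subtype (fun z => z ≠ v ∧ z ≠ w))))) := by
  refine ⟨fun D hD => hD.mem_or_mem_of_neighborSet_eq_singleton hNw, fun D => ?_⟩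
  rw [isDomSet_iff_of_pendant_path huv hNv hNw, isDomSet_comap_subtype_iff_s17,
    isDomSet_comap_subtype_iff_s17, disjoint_subtype_insert_neighborSet_iff]
  simp only [Subtype.forall, Subtype.exists, mem_subtype, ne_eq, Subtype.mk.injEq, comap_adj]
  grind [adj_comm]

theorem operationII_dominating_sets [DecidableEq V] (H : SimpleGraph V) (u v w : V)
    (huv : u ≠ v) (huw : u ≠ w) (hvw : v ≠ w)
    (hNv : H.neighborSet v = {u, w}) (hNw : H.neighborSet w = {v}) :
    (∀ D : Finset V, IsDomSet H D → v ∈ D ∨ w ∈ D) ∧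
    (∀ D : Finset V, IsDomSet H D ↔
      ((v ∈ D ∨ w ∈ D) ∧
        ((IsDomSet
            ((H.comap (Subtype.val : {z : V // z ≠ v ∧ z ≠ w} → V)).comap
              (Subtype.val : {z : {z : V // z ≠ v ∧ z ≠ w} //
                z ≠ (⟨u, huv, huw⟩ : {z : V // z ≠ v ∧ z ≠ w})} → _))
            ((D.subtype (fun z => z ≠ v ∧ z ≠ w)).subtype
              (· ≠ (⟨u, huv, huw⟩ : {z : V // z ≠ v ∧ z ≠ w}))) ∧
          Disjoint ((D.subtype (fun z => z ≠ v ∧ z ≠ w) : Finset _) : Set _)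
            (insert (⟨u, huv, huw⟩ : {z : V // z ≠ v ∧ z ≠ w})
              ((H.comap (Subtype.val : {z : V // z ≠ v ∧ z ≠ w} → V)).neighborSet
                ⟨u, huv, huw⟩)) ∧
          v ∈ D) ∨
        IsDomSet (H.comap (Subtype.val : {z : V // z ≠ v ∧ z ≠ w} → V))
          (D.subtype (fun z => z ≠ v ∧ z ≠ w))))) :=
  operationII_dominating_sets_general H u v w huv huw hNv hNw
end
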